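/- Let μ be a probability measure on a measurable space Θ and L : Θ → ℝ be μ-integrable with L not μ-a.e. constant, with exp(βL) integrable for β in an open interval. Define W(β) = −(∫ L(θ) e^{βL(θ)} dμ)/(∫ e^{βL(θ)} dμ). Then W is strictly decreasing in β. -/
import Mathlib


open MeasureTheory Real

/-- Pointwise strict positivity of the symmetrized integrand when `u ≠ v`. -/
lemma wbic_aux_pos {b1 b2 : ℝ} (hb : b1 < b2) {u v : ℝ} (huv : u ≠ v) :
    0 < (u - v) * (Real.exp (b2 * u) * Real.exp (b1 * v)
      - Real.exp (b1 * u) * Real.exp (b2 * v)) := by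
  rcases lt_or_gt_of_ne huv with h | h
  · -- u < v : both factors negative
    apply mul_pos_of_neg_of_neg (by linarith)
    rw [← Real.exp_add, ← Real.exp_add, sub_neg]
    exact Real.exp_lt_exp.mpr (by nlinarith)
  · -- v < u : both factors positive
    apply mul_pos (by linarith)
    rw [← Real.exp_add, ← Real.exp_add, sub_pos]
    exact Real.exp_lt_exp.mpr (by nlinarith)

lemma wbic_aux_nonneg {b1 b2 : ℝ} (hb : b1 < b2) (u v : ℝ) :
    0 ≤ (u - v) * (Real.exp (b2 * u) * Real.exp (b1 * v)
      - Real.exp (b1 * u) * Real.exp (b2 * v)) := by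
  rcases eq_or_ne u v with rfl | h
  · simp
  · exact (wbic_aux_pos hb h).le

/-- W(β) = −(∫ L e^{βL} dμ)/(∫ e^{βL} dμ) is strictly decreasing in β on an open
interval where the required exponential moments exist, provided L is integrable
and not μ-a.e. constant. -/
theorem wbic_strictAnti
    {Θ : Type*} [MeasurableSpace Θ] (μ : Measure Θ) [IsProbabilityMeasure μ]
    (L : Θ → ℝ) (hL : Integrable L μ)
    (hnc : ¬ ∃ c : ℝ, L =ᵐ[μ] fun _ => c)
    (a b : ℝ)
    (hexp : ∀ β ∈ Set.Ioo a b, Integrable (fun θ => Real.exp (β * L θ)) μ)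
    (hLexp : ∀ β ∈ Set.Ioo a b, Integrable (fun θ => L θ * Real.exp (β * L θ)) μ) :
    StrictAntiOn
      (fun β => -(∫ θ, L θ * Real.exp (β * L θ) ∂μ) / (∫ θ, Real.exp (β * L θ) ∂μ))
      (Set.Ioo a b) := by
  intro β₁ hβ₁ β₂ hβ₂ hlt
  -- notation
  set g1 : Θ → ℝ := fun θ => Real.exp (β₁ * L θ) with hg1
  set g2 : Θ → ℝ := fun θ => Real.exp (β₂ * L θ) with hg2
  have hig1 : Integrable g1 μ := hexp β₁ hβ₁
  have hig2 : Integrable g2 μ := hexp β₂ hβ₂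
  have hiLg1 : Integrable (fun θ => L θ * g1 θ) μ := hLexp β₁ hβ₁
  have hiLg2 : Integrable (fun θ => L θ * g2 θ) μ := hLexp β₂ hβ₂
  set Z1 := ∫ θ, g1 θ ∂μ
  set Z2 := ∫ θ, g2 θ ∂μ
  set A1 := ∫ θ, L θ * g1 θ ∂μ
  set A2 := ∫ θ, L θ * g2 θ ∂μ
  -- positivity of the partition functions
  have hZpos : ∀ (β : ℝ), Integrable (fun θ => Real.exp (β * L θ)) μ →
      0 < ∫ θ, Real.exp (β * L θ) ∂μ := by
    intro β hi
    rw [integral_pos_iff_support_of_nonneg_ae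
      (Filter.Eventually.of_forall fun θ => (Real.exp_pos _).le) hi]
    have : Function.support (fun θ => Real.exp (β * L θ)) = Set.univ := by
      ext θ; simp [Function.support, (Real.exp_pos (β * L θ)).ne']
    rw [this]
    simp
  have hZ1 : 0 < Z1 := hZpos β₁ hig1
  have hZ2 : 0 < Z2 := hZpos β₂ hig2
  -- the symmetrized function on the product space
  set ν := μ.prod μ with hν
  set H : Θ × Θ → ℝ := fun p =>
    (L p.1 - L p.2) * (g2 p.1 * g1 p.2 - g1 p.1 * g2 p.2) with hH
  have hHeq : H = fun p => ((L p.1 * g2 p.1) * g1 p.2 - (L p.1 * g1 p.1) * g2 p.2)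
      - (g2 p.1 * (L p.2 * g1 p.2) - g1 p.1 * (L p.2 * g2 p.2)) := by
    funext p; simp only [hH]; ring
  have h1 := (hiLg2.mul_prod hig1)
  have h2 := (hiLg1.mul_prod hig2)
  have h3 := (hig2.mul_prod hiLg1)
  have h4 := (hig1.mul_prod hiLg2)
  have h12 : Integrable (fun z : Θ × Θ =>
      (L z.1 * g2 z.1) * g1 z.2 - (L z.1 * g1 z.1) * g2 z.2) ν := h1.sub h2
  have h34 : Integrable (fun z : Θ × Θ =>
      g2 z.1 * (L z.2 * g1 z.2) - g1 z.1 * (L z.2 * g2 z.2)) ν := h3.sub h4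
  have hiH : Integrable H ν := by
    rw [hHeq]
    exact h12.sub h34
  have hintH : ∫ p, H p ∂ν = 2 * (A2 * Z1 - A1 * Z2) := by
    simp only [hHeq]
    rw [integral_sub h12 h34, integral_sub h1 h2, integral_sub h3 h4,
      integral_prod_mul (fun x => L x * g2 x) g1, integral_prod_mul (fun x => L x * g1 x) g2,
      integral_prod_mul g2 (fun x => L x * g1 x), integral_prod_mul g1 (fun x => L x * g2 x)]
    ring
  -- nonnegativity of H
  have hHnn : ∀ p, 0 ≤ H p := fun p => wbic_aux_nonneg hlt (L p.1) (L p.2)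
  have hintHnn : 0 ≤ ∫ p, H p ∂ν := integral_nonneg hHnn
  -- strict positivity: otherwise L would be a.e. constant
  have hintHpos : 0 < ∫ p, H p ∂ν := by
    rcases hintHnn.lt_or_eq with h | h
    · exact h
    exfalso
    have hH0 : H =ᵐ[ν] 0 :=
      (integral_eq_zero_iff_of_nonneg hHnn hiH).mp h.symm
    -- on a.e. pair, L p.1 = L p.2
    have hLL : ∀ᵐ p ∂ν, L p.1 = L p.2 := by
      filter_upwards [hH0] with p hp
      by_contra hne
      exact (wbic_aux_pos hlt hne).ne' hp
    have h2 : ∀ᵐ x ∂μ, ∀ᵐ y ∂μ, L x = L y := Measure.ae_ae_of_ae_prod hLL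
    have : (ae μ).NeBot := ae_neBot.mpr (IsProbabilityMeasure.ne_zero μ)
    obtain ⟨x, hx⟩ := h2.exists
    exact hnc ⟨L x, hx.mono fun y hy => hy.symm⟩
  -- conclude
  have hkey : A1 * Z2 < A2 * Z1 := by nlinarith [hintH ▸ hintHpos]
  simp only
  rw [div_lt_div_iff₀ hZ2 hZ1]
  nlinarith
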